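/- arXiv:2411.03123 — 6 statements merged into one kernel-verified Lean document; each statement's English description precedes it below -/
import Mathlib

section
/- Let r : Ω → ℝ be measurable and q : Ω → ℝ measurable with 1 ≤ q⁻ ≤ q⁺ < ∞, and assume 0 < r⁻ := ess inf r and r(x) ≤ q(x) for all x ∈ Ω (so r⁺ := ess sup r ≤ q⁺ < ∞). Then for every f ∈ L^{q(x)}(Ω), min{‖f‖_{q(x)}^{r⁺}, ‖f‖_{q(x)}^{r⁻}} ≤ ‖ |f|^{r(x)} ‖_{q(x)/r(x)} ≤ max{‖f‖_{q(x)}^{r⁺}, ‖f‖_{q(x)}^{r⁻}}, where ‖·‖_{q(x)/r(x)} is the Luxemburg norm associated with the exponent x ↦ q(x)/r(x). -/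
/-!
Both norms are infima of admissible scalings. Since `(|f|^r / m)^(q/r) = (|f| / m^(1/r))^q`,
`m > 0` is admissible for `|f|^r` and `q/r` iff `∫ |f / m^(1/r(x))|^q ≤ 1`, and the pointwise
scaling `m^(1/r(x))` lies between `m^(1/r⁺)` and `m^(1/r⁻)`. As the modular decreases when the
scaling grows, `l ↦ max (l^r⁺) (l^r⁻)` sends admissible scalings of `f` to admissible scalings
of `|f|^r`, and `m ↦ max (m^(1/r⁻)) (m^(1/r⁺))` sends them back; both maps are continuous, so
they pass to the infima.
-/

open MeasureTheory Filter Topology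

/-- The Luxemburg norm associated to a variable exponent `p` on a set `Ω ⊆ ℝⁿ`. -/
noncomputable def luxNorm {n : ℕ} (Ω : Set (Fin n → ℝ)) (p u : (Fin n → ℝ) → ℝ) : ℝ :=
  sInf {l : ℝ | 0 < l ∧ (∫ x in Ω, |u x / l| ^ p x) ≤ 1}

lemma Real.rpow_le_max_rpow_of_mem_Icc {x a b ρ : ℝ} (hx : 0 < x) (ha : a ≤ ρ) (hb : ρ ≤ b) :
    x ^ ρ ≤ max (x ^ b) (x ^ a) := by
  rcases le_total 1 x with h | h
  · exact le_max_of_le_left (Real.rpow_le_rpow_of_exponent_le h hb)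
  · exact le_max_of_le_right (Real.rpow_le_rpow_of_exponent_ge hx h ha)

lemma Real.min_rpow_le_rpow_of_mem_Icc {x a b ρ : ℝ} (hx : 0 < x) (ha : a ≤ ρ) (hb : ρ ≤ b) :
    min (x ^ b) (x ^ a) ≤ x ^ ρ := by
  rcases le_total 1 x with h | h
  · exact min_le_of_right_le (Real.rpow_le_rpow_of_exponent_le h ha)
  · exact min_le_of_left_le (Real.rpow_le_rpow_of_exponent_ge hx h hb)

lemma Real.min_rpow_le_of_le_max_rpow_inv {K N a b : ℝ} (hK : 0 ≤ K) (hN : 0 ≤ N)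
    (ha : 0 < a) (hb : 0 < b) (h : K ≤ max (N ^ a⁻¹) (N ^ b⁻¹)) :
    min (K ^ b) (K ^ a) ≤ N := by
  rcases le_max_iff.1 h with h | h
  · calc min (K ^ b) (K ^ a) ≤ (N ^ a⁻¹) ^ a :=
          min_le_of_right_le (Real.rpow_le_rpow hK h ha.le)
      _ = N := Real.rpow_inv_rpow hN ha.ne'
  · calc min (K ^ b) (K ^ a) ≤ (N ^ b⁻¹) ^ b :=
          min_le_of_left_le (Real.rpow_le_rpow hK h hb.le)
      _ = N := Real.rpow_inv_rpow hN hb.ne'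

lemma Real.abs_rpow_div_rpow_div {x m ρ p : ℝ} (hm : 0 < m) (hρ : 0 < ρ) :
    |(|x| ^ ρ) / m| ^ (p / ρ) = |x / m ^ ρ⁻¹| ^ p := by
  have hmρ : 0 < m ^ ρ⁻¹ := Real.rpow_pos_of_pos hm _
  rw [abs_of_nonneg (by positivity), abs_div, abs_of_pos hmρ,
    Real.div_rpow (by positivity) hm.le, Real.div_rpow (abs_nonneg x) hmρ.le,
    ← Real.rpow_mul (abs_nonneg x), ← Real.rpow_mul hm.le, mul_div_cancel₀ _ hρ.ne', inv_mul_eq_div]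

lemma csInf_le_of_continuous_of_mapsTo {S T : Set ℝ} {φ : ℝ → ℝ} (hφ : Continuous φ)
    (hS : S.Nonempty) (hSb : BddBelow S) (hTb : BddBelow T) (hST : Set.MapsTo φ S T) :
    sInf T ≤ φ (sInf S) :=
  closure_minimal (fun _ hl => csInf_le hTb (hST hl)) (isClosed_le continuous_const hφ)
    (csInf_mem_closure hS hSb)

lemma csInf_mem_Icc_of_mapsTo_max_rpow {S T : Set ℝ} {a b : ℝ} (ha : 0 < a) (hb : 0 < b)
    (hS : S.Nonempty) (hS0 : ∀ l ∈ S, 0 < l) (hT0 : ∀ m ∈ T, 0 < m)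
    (hST : Set.MapsTo (fun l => max (l ^ b) (l ^ a)) S T)
    (hTS : Set.MapsTo (fun m => max (m ^ a⁻¹) (m ^ b⁻¹)) T S) :
    sInf T ∈ Set.Icc (min (sInf S ^ b) (sInf S ^ a)) (max (sInf S ^ b) (sInf S ^ a)) := by
  have hSb : BddBelow S := ⟨0, fun l hl => (hS0 l hl).le⟩
  have hTb : BddBelow T := ⟨0, fun m hm => (hT0 m hm).le⟩
  have hcont : ∀ {s t : ℝ}, 0 ≤ s → 0 ≤ t → Continuous fun l : ℝ => max (l ^ s) (l ^ t) :=
    fun hs ht => (Real.continuous_rpow_const hs).max (Real.continuous_rpow_const ht)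
  refine ⟨Real.min_rpow_le_of_le_max_rpow_inv (Real.sInf_nonneg fun l hl => (hS0 l hl).le)
    (Real.sInf_nonneg fun m hm => (hT0 m hm).le) ha hb ?_,
    csInf_le_of_continuous_of_mapsTo (hcont hb.le ha.le) hS hSb hTb hST⟩
  exact csInf_le_of_continuous_of_mapsTo (hcont (by positivity) (by positivity))
    ((hS.image _).mono hST.image_subset) hTb hSb hTS

-- In `ℝ`, `essInf r 0 = sSup univ = 0`.
lemma ne_zero_of_essInf_ne_zero {X : Type*} [MeasurableSpace X] {μ : Measure X} {r : X → ℝ}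
    (h : essInf r μ ≠ 0) : μ ≠ 0 := by
  rintro rfl
  simp [essInf, liminf, limsInf] at h

lemma essInf_le_essSup_of_isBoundedUnder {X : Type*} [MeasurableSpace X] {μ : Measure X}
    {r : X → ℝ} (hμ : μ ≠ 0) (hlo : IsBoundedUnder (· ≥ ·) (ae μ) r)
    (hhi : IsBoundedUnder (· ≤ ·) (ae μ) r) : essInf r μ ≤ essSup r μ :=
  have : (ae μ).NeBot := ae_neBot.2 hμ
  liminf_le_limsup hhi hlo

section Modular

variable {X : Type*} [MeasurableSpace X] {μ : Measure X} {f q r : X → ℝ} {a b M : ℝ}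

lemma integrable_abs_div_rpow_of_le {s : X → ℝ} {c : ℝ}
    (hfq : Integrable (fun x => |f x| ^ q x) μ) (hq : ∀ᵐ x ∂μ, 0 ≤ q x ∧ q x ≤ M)
    (hc : 0 < c) (hs : ∀ᵐ x ∂μ, c ≤ s x)
    (hmeas : AEStronglyMeasurable (fun x => |f x / s x| ^ q x) μ) :
    Integrable (fun x => |f x / s x| ^ q x) μ := by
  refine (hfq.const_mul (min (c ^ M) (c ^ (0 : ℝ)))⁻¹).mono' hmeas ?_
  filter_upwards [hq, hs] with x ⟨hq0, hqM⟩ hcs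
  have hs0 : 0 < s x := hc.trans_le hcs
  have hlow : min (c ^ M) (c ^ (0 : ℝ)) ≤ s x ^ q x :=
    (Real.min_rpow_le_rpow_of_mem_Icc hc hq0 hqM).trans (Real.rpow_le_rpow hc.le hcs hq0)
  have hmin : 0 < min (c ^ M) (c ^ (0 : ℝ)) := lt_min (by positivity) (by positivity)
  rw [Real.norm_eq_abs, abs_of_nonneg (by positivity), abs_div, abs_of_pos hs0,
    Real.div_rpow (abs_nonneg _) hs0.le, ← div_eq_inv_mul]
  gcongr

lemma integral_abs_div_rpow_le_of_le {s t : X → ℝ} (hq : ∀ᵐ x ∂μ, 0 ≤ q x)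
    (hs : ∀ᵐ x ∂μ, 0 < s x) (hst : ∀ᵐ x ∂μ, s x ≤ t x)
    (hint : Integrable (fun x => |f x / s x| ^ q x) μ) :
    ∫ x, |f x / t x| ^ q x ∂μ ≤ ∫ x, |f x / s x| ^ q x ∂μ := by
  refine integral_mono_of_nonneg (ae_of_all _ fun x => by positivity) hint ?_
  filter_upwards [hq, hs, hst] with x hq hs hst
  have ht : 0 < t x := hs.trans_le hst
  rw [abs_div, abs_div, abs_of_pos hs, abs_of_pos ht]
  gcongr

lemma exists_integral_abs_div_rpow_le_one (hfq : Integrable (fun x => |f x| ^ q x) μ)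
    (hq : ∀ᵐ x ∂μ, 1 ≤ q x) : ∃ l, 0 < l ∧ ∫ x, |f x / l| ^ q x ∂μ ≤ 1 := by
  set I := ∫ x, |f x| ^ q x ∂μ
  have hI : 0 ≤ I := integral_nonneg fun x => by positivity
  refine ⟨I + 1, by positivity, ?_⟩
  calc ∫ x, |f x / (I + 1)| ^ q x ∂μ ≤ ∫ x, |f x| ^ q x / (I + 1) ∂μ := by
        refine integral_mono_of_nonneg (ae_of_all _ fun x => by positivity)
          (hfq.div_const _) ?_
        filter_upwards [hq] with x hx
        rw [abs_div, abs_of_pos (by positivity : 0 < I + 1),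
          Real.div_rpow (abs_nonneg _) (by positivity)]
        gcongr
        exact Real.self_le_rpow_of_one_le (by linarith) hx
    _ = I / (I + 1) := integral_div _ _
    _ ≤ 1 := by rw [div_le_one (by positivity)]; linarith

lemma integral_abs_div_max_rpow_le (hf : Measurable f) (hqm : Measurable q)
    (hfq : Integrable (fun x => |f x| ^ q x) μ) (hq : ∀ᵐ x ∂μ, 0 ≤ q x ∧ q x ≤ M)
    (ha : 0 < a) (hr : ∀ᵐ x ∂μ, a ≤ r x ∧ r x ≤ b) {l : ℝ} (hl : 0 < l) :
    ∫ x, |f x / max (l ^ b) (l ^ a) ^ (r x)⁻¹| ^ q x ∂μ ≤ ∫ x, |f x / l| ^ q x ∂μ := by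
  have hint : Integrable (fun x => |f x / l| ^ q x) μ :=
    integrable_abs_div_rpow_of_le hfq hq hl (ae_of_all _ fun _ => le_rfl)
      (by fun_prop : Measurable _).aestronglyMeasurable
  refine integral_abs_div_rpow_le_of_le (hq.mono fun x hx => hx.1) (ae_of_all _ fun _ => hl) ?_ hint
  filter_upwards [hr] with x ⟨hax, hxb⟩
  have hrx : 0 < r x := ha.trans_le hax
  calc l = (l ^ r x) ^ (r x)⁻¹ := (Real.rpow_rpow_inv hl.le hrx.ne').symm
    _ ≤ _ := Real.rpow_le_rpow (by positivity)
        (Real.rpow_le_max_rpow_of_mem_Icc hl hax hxb) (inv_nonneg.2 hrx.le)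

lemma integral_abs_div_max_rpow_inv_le (hf : Measurable f) (hqm : Measurable q)
    (hrm : Measurable r) (hfq : Integrable (fun x => |f x| ^ q x) μ)
    (hq : ∀ᵐ x ∂μ, 0 ≤ q x ∧ q x ≤ M) (ha : 0 < a) (hr : ∀ᵐ x ∂μ, a ≤ r x ∧ r x ≤ b)
    {m : ℝ} (hm : 0 < m) :
    ∫ x, |f x / max (m ^ a⁻¹) (m ^ b⁻¹)| ^ q x ∂μ ≤ ∫ x, |f x / m ^ (r x)⁻¹| ^ q x ∂μ := by
  have hr' : ∀ᵐ x ∂μ, b⁻¹ ≤ (r x)⁻¹ ∧ (r x)⁻¹ ≤ a⁻¹ := hr.mono fun x ⟨hax, hxb⟩ =>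
    ⟨inv_anti₀ (ha.trans_le hax) hxb, inv_anti₀ ha hax⟩
  have hint : Integrable (fun x => |f x / m ^ (r x)⁻¹| ^ q x) μ :=
    integrable_abs_div_rpow_of_le hfq hq (lt_min (by positivity) (by positivity))
      (hr'.mono fun x hx => Real.min_rpow_le_rpow_of_mem_Icc hm hx.1 hx.2)
      (by fun_prop : Measurable _).aestronglyMeasurable
  exact integral_abs_div_rpow_le_of_le (hq.mono fun x hx => hx.1)
    (ae_of_all _ fun _ => by positivity)
    (hr'.mono fun x hx => Real.rpow_le_max_rpow_of_mem_Icc hm hx.1 hx.2) hint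

end Modular

lemma luxNorm_div_abs_rpow_eq {n : ℕ} {Ω : Set (Fin n → ℝ)} {q r f : (Fin n → ℝ) → ℝ}
    (hr : ∀ᵐ x ∂(volume.restrict Ω), 0 < r x) :
    luxNorm Ω (fun x => q x / r x) (fun x => |f x| ^ r x) =
      sInf {m : ℝ | 0 < m ∧ ∫ x in Ω, |f x / m ^ (r x)⁻¹| ^ q x ≤ 1} :=
  congrArg sInf <| Set.ext fun _ => and_congr_right fun hm => by
    rw [integral_congr_ae (hr.mono fun x hx => Real.abs_rpow_div_rpow_div hm hx)]

/-- Relation between the Luxemburg norms of `|f|^{r(x)}` (for the exponent `q(x)/r(x)`)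
and of `f` (for the exponent `q(x)`), with `r⁺ = esssup r` and `r⁻ = essinf r`. -/
theorem luxNorm_rpow_estimate
    {n : ℕ} (Ω : Set (Fin n → ℝ)) (hΩ : MeasurableSet Ω)
    (q : (Fin n → ℝ) → ℝ) (hqmeas : Measurable q)
    (hqlb : ∀ᵐ x ∂(volume.restrict Ω), 1 ≤ q x)
    (hqub : ∃ M : ℝ, ∀ᵐ x ∂(volume.restrict Ω), q x ≤ M)
    (r : (Fin n → ℝ) → ℝ) (hrmeas : Measurable r) (hrnn : ∀ x, 0 ≤ r x)
    (hr0 : 0 < essInf r (volume.restrict Ω))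
    (hrq : ∀ x ∈ Ω, r x ≤ q x)
    (f : (Fin n → ℝ) → ℝ) (hf : Measurable f)
    (hfmem : IntegrableOn (fun x => |f x| ^ q x) Ω) :
    min (luxNorm Ω q f ^ essSup r (volume.restrict Ω))
        (luxNorm Ω q f ^ essInf r (volume.restrict Ω)) ≤
      luxNorm Ω (fun x => q x / r x) (fun x => |f x| ^ r x) ∧
    luxNorm Ω (fun x => q x / r x) (fun x => |f x| ^ r x) ≤
      max (luxNorm Ω q f ^ essSup r (volume.restrict Ω))
          (luxNorm Ω q f ^ essInf r (volume.restrict Ω)) := by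
  set μ := volume.restrict Ω
  obtain ⟨M, hqM⟩ := hqub
  have hq : ∀ᵐ x ∂μ, 0 ≤ q x ∧ q x ≤ M :=
    (hqlb.and hqM).mono fun x hx => ⟨zero_le_one.trans hx.1, hx.2⟩
  have hrM : ∀ᵐ x ∂μ, r x ≤ M :=
    (ae_restrict_of_forall_mem hΩ hrq).mp (hqM.mono fun x hqx hrqx => hrqx.trans hqx)
  have hlo : IsBoundedUnder (· ≥ ·) (ae μ) r := ⟨0, eventually_map.2 (ae_of_all _ hrnn)⟩
  have hhi : IsBoundedUnder (· ≤ ·) (ae μ) r := ⟨M, eventually_map.2 hrM⟩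
  have hr : ∀ᵐ x ∂μ, essInf r μ ≤ r x ∧ r x ≤ essSup r μ :=
    (ae_essInf_le hlo).and (ae_le_essSup hhi)
  have hb : 0 < essSup r μ := hr0.trans_le
    (essInf_le_essSup_of_isBoundedUnder (ne_zero_of_essInf_ne_zero hr0.ne') hlo hhi)
  rw [luxNorm_div_abs_rpow_eq (hr.mono fun x hx => hr0.trans_le hx.1)]
  refine csInf_mem_Icc_of_mapsTo_max_rpow hr0 hb
    (exists_integral_abs_div_rpow_le_one hfmem hqlb) (fun _ hl => hl.1) (fun _ hm => hm.1)
    (fun l ⟨hl, hlS⟩ => ⟨by positivity, ?_⟩) (fun m ⟨hm, hmT⟩ => ⟨by positivity, ?_⟩)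
  · exact (integral_abs_div_max_rpow_le hf hqmeas hfmem hq hr0 hr hl).trans hlS
  · exact (integral_abs_div_max_rpow_inv_le hf hqmeas hrmeas hfmem hq hr0 hr hm).trans hmT
end

section
/- Let E be a bounded open set in X, let T : Ē → X* be bounded, continuous and of class (S_+), and let S : D(S) ⊆ X* → X be demicontinuous and of class (S_+) (i.e., v_n ⇀ v in X* and limsup_n (v_n − v)(S v_n) ≤ 0 imply v_n → v strongly in X*), with T(Ē) ⊆ D(S). Then S∘T : Ē → X is demicontinuous as a map into X and of class (S_+)_T. -/
/-!
By (S₊) of `S`, the weak convergence `T u_k ⇀ y` together with the limsup condition is strong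
convergence `T u_k → y`. Then `T u_k (u_k - u) = (T u_k - y) (u_k - u) + y (u_k - u) → 0`, the first
term because `u_k` stays in the bounded set `Ē`, the second because `u_k ⇀ u`; so (S₊) of `T`
yields `u_k → u`. Demicontinuity of `S ∘ T` is continuity of `T` followed by demicontinuity of `S`.
-/

open Filter Topology

def WeakConv {X : Type*} [NormedAddCommGroup X] [NormedSpace ℝ X] (u : ℕ → X) (x : X) : Prop :=
  ∀ f : X →L[ℝ] ℝ, Tendsto (fun k => f (u k)) atTop (𝓝 (f x))

/-- Weak convergence of a sequence in the dual of a reflexive space, tested (via the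
canonical identification `X ≅ X**`) against elements of `X`. -/
def WeakConvDual {X : Type*} [NormedAddCommGroup X] [NormedSpace ℝ X]
    (v : ℕ → X →L[ℝ] ℝ) (w : X →L[ℝ] ℝ) : Prop :=
  ∀ x : X, Tendsto (fun k => v k x) atTop (𝓝 (w x))

theorem tendsto_apply_zero_of_tendsto_zero_of_isBounded {α 𝕜 E F : Type*}
    [NontriviallyNormedField 𝕜] [SeminormedAddCommGroup E] [NormedSpace 𝕜 E]
    [SeminormedAddCommGroup F] [NormedSpace 𝕜 F] {l : Filter α}
    {v : α → E →L[𝕜] F} {x : α → E} (hv : Tendsto v l (𝓝 0))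
    (hx : Bornology.IsBounded (Set.range x)) :
    Tendsto (fun k => v k (x k)) l (𝓝 0) := by
  obtain ⟨C, hC⟩ := hx.exists_norm_le
  have hvC : Tendsto (fun k => ‖v k‖ * C) l (𝓝 0) := by
    simpa using (tendsto_zero_iff_norm_tendsto_zero.1 hv).mul_const C
  refine squeeze_zero_norm (fun k => ?_) hvC
  exact (v k).le_opNorm_of_le (hC _ ⟨k, rfl⟩)

section WeakConv

variable {X : Type*} [NormedAddCommGroup X] [NormedSpace ℝ X] {u : ℕ → X} {x : X}

theorem WeakConv.tendsto_apply_sub (hu : WeakConv u x) (f : X →L[ℝ] ℝ) :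
    Tendsto (fun k => f (u k - x)) atTop (𝓝 0) := by
  simpa only [map_sub, sub_self] using (hu f).sub_const (f x)

theorem WeakConv.tendsto_apply_sub_of_tendsto (hu : WeakConv u x)
    (hb : Bornology.IsBounded (Set.range u)) {v : ℕ → X →L[ℝ] ℝ} {y : X →L[ℝ] ℝ}
    (hv : Tendsto v atTop (𝓝 y)) :
    Tendsto (fun k => v k (u k - x)) atTop (𝓝 0) := by
  have hb' : Bornology.IsBounded (Set.range fun k => u k - x) :=
    (hb.sub (Bornology.isBounded_singleton (x := x))).subset
      (by rintro _ ⟨k, rfl⟩; exact Set.sub_mem_sub ⟨k, rfl⟩ rfl)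
  have hnull := tendsto_apply_zero_of_tendsto_zero_of_isBounded
    (tendsto_sub_nhds_zero_iff.2 hv) hb'
  simpa only [sub_apply, sub_add_cancel, zero_add] using
    hnull.add (hu.tendsto_apply_sub y)

end WeakConv

theorem comp_Splus_is_SplusT_general
    {X : Type*} [NormedAddCommGroup X] [NormedSpace ℝ X]
    (E : Set X) (hEb : Bornology.IsBounded E)
    (T : X → X →L[ℝ] ℝ)
    (hTc : ContinuousOn T (closure E))
    (hTSplus : ∀ (u : ℕ → X) (ulim : X), (∀ k, u k ∈ closure E) → WeakConv u ulim →
      limsup (fun k => T (u k) (u k - ulim)) atTop ≤ 0 → Tendsto u atTop (𝓝 ulim))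
    (D : Set (X →L[ℝ] ℝ)) (S : (X →L[ℝ] ℝ) → X)
    (hTD : ∀ u ∈ closure E, T u ∈ D)
    (hSdemi : ∀ (v : ℕ → X →L[ℝ] ℝ) (w : X →L[ℝ] ℝ), (∀ k, v k ∈ D) → w ∈ D →
      Tendsto v atTop (𝓝 w) → WeakConv (fun k => S (v k)) (S w))
    (hSplus : ∀ (v : ℕ → X →L[ℝ] ℝ) (w : X →L[ℝ] ℝ), (∀ k, v k ∈ D) →
      WeakConvDual v w → limsup (fun k => (v k - w) (S (v k))) atTop ≤ 0 →
      Tendsto v atTop (𝓝 w)) :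
    (∀ (u : ℕ → X) (ulim : X), (∀ k, u k ∈ closure E) → ulim ∈ closure E →
      Tendsto u atTop (𝓝 ulim) →
      WeakConv (fun k => S (T (u k))) (S (T ulim))) ∧
    (∀ (u : ℕ → X) (ulim : X) (y : X →L[ℝ] ℝ), (∀ k, u k ∈ closure E) →
      WeakConv u ulim → WeakConvDual (fun k => T (u k)) y →
      limsup (fun k => (T (u k) - y) (S (T (u k)))) atTop ≤ 0 →
      Tendsto u atTop (𝓝 ulim)) := by
  constructor
  · intro u ulim hu hulim hconv
    have hTu : Tendsto (fun k => T (u k)) atTop (𝓝 (T ulim)) :=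
      (hTc ulim hulim).tendsto.comp (tendsto_nhdsWithin_iff.2 ⟨hconv, .of_forall hu⟩)
    exact hSdemi _ _ (fun k => hTD _ (hu k)) (hTD _ hulim) hTu
  · intro u ulim y hu hweak hTweak hlimsup
    have hTu : Tendsto (fun k => T (u k)) atTop (𝓝 y) :=
      hSplus _ y (fun k => hTD _ (hu k)) hTweak hlimsup
    have hbdd : Bornology.IsBounded (Set.range u) :=
      hEb.closure.subset (Set.range_subset_iff.2 hu)
    refine hTSplus u ulim hu hweak ?_
    rw [(hweak.tendsto_apply_sub_of_tendsto hbdd hTu).limsup_eq]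

/-- If `T : Ē → X*` is bounded, continuous and of class `(S₊)` and `S : D(S) ⊆ X* → X`
is demicontinuous and of class `(S₊)` with `T(Ē) ⊆ D(S)`, then `S ∘ T` is
demicontinuous (into `X`, weakly) and of class `(S₊)_T`. -/
theorem comp_Splus_is_SplusT
    {X : Type*} [NormedAddCommGroup X] [NormedSpace ℝ X] [CompleteSpace X]
    (hrefl : Function.Surjective (NormedSpace.inclusionInDoubleDual ℝ X))
    (E : Set X) (hEo : IsOpen E) (hEb : Bornology.IsBounded E)
    (T : X → X →L[ℝ] ℝ)
    (hTb : ∀ B ⊆ closure E, Bornology.IsBounded B → Bornology.IsBounded (T '' B))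
    (hTc : ContinuousOn T (closure E))
    (hTSplus : ∀ (u : ℕ → X) (ulim : X), (∀ k, u k ∈ closure E) → WeakConv u ulim →
      limsup (fun k => T (u k) (u k - ulim)) atTop ≤ 0 → Tendsto u atTop (𝓝 ulim))
    (D : Set (X →L[ℝ] ℝ)) (S : (X →L[ℝ] ℝ) → X)
    (hTD : ∀ u ∈ closure E, T u ∈ D)
    (hSdemi : ∀ (v : ℕ → X →L[ℝ] ℝ) (w : X →L[ℝ] ℝ), (∀ k, v k ∈ D) → w ∈ D →
      Tendsto v atTop (𝓝 w) → WeakConv (fun k => S (v k)) (S w))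
    (hSplus : ∀ (v : ℕ → X →L[ℝ] ℝ) (w : X →L[ℝ] ℝ), (∀ k, v k ∈ D) →
      WeakConvDual v w → limsup (fun k => (v k - w) (S (v k))) atTop ≤ 0 →
      Tendsto v atTop (𝓝 w)) :
    (∀ (u : ℕ → X) (ulim : X), (∀ k, u k ∈ closure E) → ulim ∈ closure E →
      Tendsto u atTop (𝓝 ulim) →
      WeakConv (fun k => S (T (u k))) (S (T ulim))) ∧
    (∀ (u : ℕ → X) (ulim : X) (y : X →L[ℝ] ℝ), (∀ k, u k ∈ closure E) →
      WeakConv u ulim → WeakConvDual (fun k => T (u k)) y →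
      limsup (fun k => (T (u k) - y) (S (T (u k)))) atTop ≤ 0 →
      Tendsto u atTop (𝓝 ulim)) :=
  comp_Splus_is_SplusT_general E hEb T hTc hTSplus D S hTD hSdemi hSplus
end

section
/- For every real p with 1 < p < 2 and all ξ, η ∈ ℝ^n with (ξ, η) ≠ (0, 0): ( |ξ|^{p−2} ξ − |η|^{p−2} η ) · (ξ − η) ≥ (p − 1) |ξ − η|^2 / ( |ξ| + |η| )^{2−p}, where · denotes the Euclidean inner product and |·| the Euclidean norm. -/
/-!
With `a = |ξ|`, `b = |η|`, `s = ξ·η` and `q = p - 1 ∈ (0, 1)`, both sides are affine in `s`, which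
ranges over `[-ab, ab]`, so it suffices to check the extreme cases `s = ±ab`. They are the scalar
inequalities `q (a+b)^{q-1} (a-b)² ≤ (a^q - b^q)(a - b)`, from the tangent line of the concave map
`t ↦ t^q` at the larger of `a, b`, and `q (a+b)^q ≤ a^q + b^q`, from subadditivity of `t ↦ t^q`.
-/

open RealInnerProductSpace

namespace Real

variable {q a b : ℝ}

lemma rpow_sub_one_mul_self (ha : 0 ≤ a) (hq : q ≠ 0) : a ^ (q - 1) * a = a ^ q := by
  rw [← rpow_add_one' ha (by simpa using hq), sub_add_cancel]

lemma mul_rpow_sub_one_mul_sub_le_rpow_sub_rpow (hq0 : 0 ≤ q) (hq1 : q ≤ 1) (ha : 0 < a)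
    (hb : 0 ≤ b) : q * a ^ (q - 1) * (a - b) ≤ a ^ q - b ^ q := by
  have bernoulli := rpow_one_add_le_one_add_mul_self
    (by linarith [div_nonneg hb ha.le] : -1 ≤ b / a - 1) hq0 hq1
  rw [add_sub_cancel, div_rpow hb ha.le, div_le_iff₀ (rpow_pos_of_pos ha q)] at bernoulli
  calc q * a ^ (q - 1) * (a - b) = a ^ q - (1 + q * (b / a - 1)) * a ^ q := by
        rw [rpow_sub_one ha.ne']; field_simp; ring
    _ ≤ a ^ q - b ^ q := by linarith

lemma mul_add_rpow_sub_one_mul_sub_sq_le (hq0 : 0 ≤ q) (hq1 : q ≤ 1) (ha : 0 ≤ a)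
    (hb : 0 ≤ b) : q * (a + b) ^ (q - 1) * (a - b) ^ 2 ≤ (a ^ q - b ^ q) * (a - b) := by
  wlog hba : b ≤ a generalizing a b
  · have := this hb ha (le_of_not_ge hba)
    rw [add_comm] at this
    linear_combination this
  rcases ha.eq_or_lt with rfl | ha
  · simp [le_antisymm hba hb]
  have hsum : (a + b) ^ (q - 1) ≤ a ^ (q - 1) :=
    rpow_le_rpow_of_nonpos ha (by linarith) (by linarith)
  have tangent := mul_rpow_sub_one_mul_sub_le_rpow_sub_rpow hq0 hq1 ha hb
  calc q * (a + b) ^ (q - 1) * (a - b) ^ 2 ≤ q * a ^ (q - 1) * (a - b) * (a - b) := by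
        rw [sq, ← mul_assoc]; gcongr
    _ ≤ (a ^ q - b ^ q) * (a - b) := by gcongr

lemma mul_add_rpow_le_rpow_add_rpow (hq0 : 0 ≤ q) (hq1 : q ≤ 1) (ha : 0 ≤ a) (hb : 0 ≤ b) :
    q * (a + b) ^ q ≤ a ^ q + b ^ q :=
  calc q * (a + b) ^ q ≤ 1 * (a + b) ^ q := by gcongr
    _ ≤ a ^ q + b ^ q := by rw [one_mul]; exact rpow_add_le_add_rpow ha hb hq0 hq1

end Real

lemma mul_le_of_abs_le_of_abs_mul_le {α β s m : ℝ} (hs : |s| ≤ m) (h : |β * m| ≤ α) :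
    β * s ≤ α :=
  calc β * s ≤ |β| * |s| := (le_abs_self _).trans (abs_mul _ _).le
    _ ≤ |β| * m := by gcongr
    _ = |β * m| := by rw [abs_mul, abs_of_nonneg ((abs_nonneg s).trans hs)]
    _ ≤ α := h

open Real in
lemma mul_add_rpow_sub_one_mul_le_of_abs_le_mul {q a b s : ℝ} (hq0 : 0 < q) (hq1 : q ≤ 1)
    (ha : 0 ≤ a) (hb : 0 ≤ b) (hs : |s| ≤ a * b) :
    q * (a + b) ^ (q - 1) * (a ^ 2 + b ^ 2 - 2 * s) ≤
      a ^ (q - 1) * a ^ 2 + b ^ (q - 1) * b ^ 2 - (a ^ (q - 1) + b ^ (q - 1)) * s := by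
  have hA := rpow_sub_one_mul_self ha hq0.ne'
  have hB := rpow_sub_one_mul_self hb hq0.ne'
  have hC := rpow_sub_one_mul_self (add_nonneg ha hb) hq0.ne'
  have aligned := mul_add_rpow_sub_one_mul_sub_sq_le hq0.le hq1 ha hb
  set k := q * (a + b) ^ (q - 1)
  have opposed : k * (a + b) ^ 2 ≤ (a ^ q + b ^ q) * (a + b) :=
    calc k * (a + b) ^ 2 = q * (a + b) ^ q * (a + b) := by rw [← hC]; ring
      _ ≤ (a ^ q + b ^ q) * (a + b) := by
        gcongr; exact mul_add_rpow_le_rpow_add_rpow hq0.le hq1 ha hb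
  suffices (a ^ (q - 1) + b ^ (q - 1) - 2 * k) * s ≤
      a ^ (q - 1) * a ^ 2 + b ^ (q - 1) * b ^ 2 - k * (a ^ 2 + b ^ 2) by linarith
  refine mul_le_of_abs_le_of_abs_mul_le hs (abs_le.2 ⟨?_, ?_⟩)
  · linear_combination opposed - (a + b) * hA - (a + b) * hB
  · linear_combination aligned - (a - b) * hA + (a - b) * hB

lemma sub_one_mul_norm_sub_sq_div_le_inner {E : Type*} [NormedAddCommGroup E]
    [InnerProductSpace ℝ E] {p : ℝ} (hp1 : 1 < p) (hp2 : p ≤ 2) (x y : E) :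
    (p - 1) * ‖x - y‖ ^ 2 / (‖x‖ + ‖y‖) ^ (2 - p) ≤
      ⟪‖x‖ ^ (p - 2) • x - ‖y‖ ^ (p - 2) • y, x - y⟫ := by
  have key := mul_add_rpow_sub_one_mul_le_of_abs_le_mul (q := p - 1) (by linarith) (by linarith)
    (norm_nonneg x) (norm_nonneg y) (abs_real_inner_le_norm x y)
  rw [show p - 1 - 1 = p - 2 by ring] at key
  have hlhs : (p - 1) * ‖x - y‖ ^ 2 / (‖x‖ + ‖y‖) ^ (2 - p) =
      (p - 1) * (‖x‖ + ‖y‖) ^ (p - 2) * (‖x‖ ^ 2 + ‖y‖ ^ 2 - 2 * ⟪x, y⟫) := by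
    rw [norm_sub_sq_real, div_eq_mul_inv, ← Real.rpow_neg (by positivity), neg_sub]; ring
  have hrhs : ⟪‖x‖ ^ (p - 2) • x - ‖y‖ ^ (p - 2) • y, x - y⟫ =
      ‖x‖ ^ (p - 2) * ‖x‖ ^ 2 + ‖y‖ ^ (p - 2) * ‖y‖ ^ 2 -
        (‖x‖ ^ (p - 2) + ‖y‖ ^ (p - 2)) * ⟪x, y⟫ := by
    simp only [inner_sub_left, inner_sub_right, real_inner_smul_left, real_inner_self_eq_norm_sq,
      real_inner_comm x y]
    ring
  rwa [hlhs, hrhs]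

/-- The singular monotonicity inequality for the `p`-Laplacian vector field, `1 < p < 2`:
`(|ξ|^{p-2}ξ − |η|^{p-2}η)·(ξ − η) ≥ (p−1)|ξ − η|²/(|ξ|+|η|)^{2−p}` for `(ξ,η) ≠ (0,0)`. -/
theorem pLaplace_monotonicity_singular (p : ℝ) (hp1 : 1 < p) (hp2 : p < 2) :
    ∀ (n : ℕ) (ξ η : EuclideanSpace ℝ (Fin n)), ¬(ξ = 0 ∧ η = 0) →
      (p - 1) * ‖ξ - η‖ ^ (2 : ℝ) / (‖ξ‖ + ‖η‖) ^ (2 - p) ≤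
        ⟪(‖ξ‖ ^ (p - 2)) • ξ - (‖η‖ ^ (p - 2)) • η, ξ - η⟫ := by
  intro n ξ η _
  rw [Real.rpow_two]
  exact sub_one_mul_norm_sub_sq_div_le_inner hp1 hp2.le ξ η
end

section
/- Continuity of the inverse of an (S_+)-operator: let F : X → X* be a bijection of class (S_+), and suppose its inverse T := F^{−1} : X* → X is bounded and demicontinuous. Then T is sequentially continuous: v_n → v strongly in X* implies T v_n → T v strongly in X. -/
open Filter Topology

namespace WeakConv

variable {X : Type*} [NormedAddCommGroup X] [NormedSpace ℝ X] {u : ℕ → X} {x : X}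

/-- Uniform boundedness, applied to the evaluations `f ↦ f (u k)` on the Banach space `X*`. -/
theorem exists_norm_le (hu : WeakConv u x) : ∃ C, ∀ k, ‖u k‖ ≤ C := by
  have hpointwise : ∀ f : X →L[ℝ] ℝ, ∃ C, ∀ k, ‖f (u k)‖ ≤ C := by
    intro f
    obtain ⟨C, hC⟩ := isBounded_iff_forall_norm_le.1 (Metric.isBounded_range_of_tendsto _ (hu f))
    exact ⟨C, fun k => hC _ ⟨k, rfl⟩⟩
  obtain ⟨C, hC⟩ :=
    banach_steinhaus (g := fun k => NormedSpace.inclusionInDoubleDual ℝ X (u k)) hpointwise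
  refine ⟨C, fun k => ?_⟩
  rw [← (NormedSpace.inclusionInDoubleDualLi ℝ).norm_map (u k)]
  exact hC k

theorem tendsto_apply_sub_s12 (hu : WeakConv u x) (f : X →L[ℝ] ℝ) :
    Tendsto (fun k => f (u k - x)) atTop (𝓝 0) := by
  simpa only [map_sub, sub_self] using (hu f).sub_const (f x)

theorem tendsto_apply_sub_of_tendsto_s12 (hu : WeakConv u x) {v : ℕ → X →L[ℝ] ℝ} {w : X →L[ℝ] ℝ}
    (hv : Tendsto v atTop (𝓝 w)) : Tendsto (fun k => v k (u k - x)) atTop (𝓝 0) := by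
  obtain ⟨C, hC⟩ := hu.exists_norm_le
  have hbdd : IsBoundedUnder (· ≤ ·) atTop (fun k => ‖u k - x‖) :=
    isBoundedUnder_of ⟨C + ‖x‖, fun k => (norm_sub_le _ _).trans (by gcongr; exact hC k)⟩
  have hnull : Tendsto (fun k => (v k - w) (u k - x)) atTop (𝓝 0) :=
    (tendsto_sub_nhds_zero_iff.2 hv).op_zero_isBoundedUnder_le hbdd (fun φ y => φ y)
      fun φ y => φ.le_opNorm y
  simpa only [sub_apply, sub_add_cancel, add_zero] using hnull.add (hu.tendsto_apply_sub_s12 w)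

end WeakConv

theorem inverse_of_Splus_operator_continuous_general
    {X : Type*} [NormedAddCommGroup X] [NormedSpace ℝ X]
    (F : X → X →L[ℝ] ℝ)
    (hFSplus : ∀ (u : ℕ → X) (ulim : X), WeakConv u ulim →
      limsup (fun k => F (u k) (u k - ulim)) atTop ≤ 0 → Tendsto u atTop (𝓝 ulim))
    (T : (X →L[ℝ] ℝ) → X) (hTF : ∀ v, F (T v) = v)
    (hTdemi : ∀ (v : ℕ → X →L[ℝ] ℝ) (w : X →L[ℝ] ℝ), Tendsto v atTop (𝓝 w) →
      WeakConv (fun k => T (v k)) (T w))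
    (v : ℕ → X →L[ℝ] ℝ) (w : X →L[ℝ] ℝ) (hv : Tendsto v atTop (𝓝 w)) :
    Tendsto (fun k => T (v k)) atTop (𝓝 (T w)) := by
  have hweak : WeakConv (fun k => T (v k)) (T w) := hTdemi v w hv
  have hpairing : Tendsto (fun k => F (T (v k)) (T (v k) - T w)) atTop (𝓝 0) := by
    simpa only [hTF] using hweak.tendsto_apply_sub_of_tendsto_s12 hv
  exact hFSplus _ _ hweak hpairing.limsup_eq.le

/-- If `F : X → X*` is a bijection of class `(S₊)` whose inverse `T = F⁻¹` is bounded and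
demicontinuous, then `T` is sequentially continuous. -/
theorem inverse_of_Splus_operator_continuous
    {X : Type*} [NormedAddCommGroup X] [NormedSpace ℝ X] [CompleteSpace X]
    (hrefl : Function.Surjective (NormedSpace.inclusionInDoubleDual ℝ X))
    (F : X → X →L[ℝ] ℝ) (hFbij : Function.Bijective F)
    (hFSplus : ∀ (u : ℕ → X) (ulim : X), WeakConv u ulim →
      limsup (fun k => F (u k) (u k - ulim)) atTop ≤ 0 → Tendsto u atTop (𝓝 ulim))
    (T : (X →L[ℝ] ℝ) → X) (hTF : ∀ v, F (T v) = v) (hFT : ∀ u, T (F u) = u)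
    (hTb : ∀ B : Set (X →L[ℝ] ℝ), Bornology.IsBounded B → Bornology.IsBounded (T '' B))
    (hTdemi : ∀ (v : ℕ → X →L[ℝ] ℝ) (w : X →L[ℝ] ℝ), Tendsto v atTop (𝓝 w) →
      WeakConv (fun k => T (v k)) (T w))
    (v : ℕ → X →L[ℝ] ℝ) (w : X →L[ℝ] ℝ) (hv : Tendsto v atTop (𝓝 w)) :
    Tendsto (fun k => T (v k)) atTop (𝓝 (T w)) :=
  inverse_of_Splus_operator_continuous_general F hFSplus T hTF hTdemi v w hv
end

section
/- Well-definedness of the Nemytskii map: assume f : Ω × ℝ × ℝ^n → ℝ is a Carathéodory function and there are a constant C > 0, an exponent q ∈ C(Ω̄) with 1 < q⁻, q(x) ≤ p_M(x) on Ω, a function k with ∫_Ω |k|^{q'(x)} dx < ∞ (q'(x) := q(x)/(q(x)−1)), and nonnegative measurable functions r_i with 1 < r_i(x) q'(x) ≤ p_i(x) on Ω, such that |f(x, s, ξ)| ≤ C ( |k(x)| + |s|^{q(x)−1} + Σ_{i=1}^n |ξ_i|^{r_i(x)} ) for a.e. x ∈ Ω and all (s, ξ) ∈ ℝ × ℝ^n.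 Then for every measurable u : Ω → ℝ with ∫_Ω |u|^{p_M(x)} dx < ∞ and every measurable g : Ω → ℝ^n with ∫_Ω |g_i|^{p_i(x)} dx < ∞ for all i, one has ∫_Ω |f(x, u(x), g(x))|^{q'(x)} dx < ∞. -/
open MeasureTheory Filter Topology Finset

/-!
Since `q` is continuous and `> 1` on the compact set `closure Ω`, the conjugate exponent `q'` is
bounded on `Ω` by some `Q`, so raising the growth bound to the power `q'` costs only a constant.
The exponents then collapse: `(|s| ^ (q - 1)) ^ q' = |s| ^ q` and
`(|ξᵢ| ^ rᵢ) ^ q' = |ξᵢ| ^ (rᵢ q')`, and as `q ≤ p_M` and `rᵢ q' ≤ pᵢ` these are at most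
`|s| ^ p_M + 1` and `|ξᵢ| ^ pᵢ + 1`, which are integrable on the finite-measure set `Ω`.
-/

lemma Real.rpow_le_rpow_add_one {a s p : ℝ} (ha : 0 ≤ a) (hs : 0 ≤ s) (hsp : s ≤ p) :
    a ^ s ≤ a ^ p + 1 := by
  rcases le_total a 1 with h | h
  · linarith [Real.rpow_le_one ha h hs, Real.rpow_nonneg ha p]
  · linarith [Real.rpow_le_rpow_of_exponent_le h hsp]

lemma Real.rpow_sum_le_card_rpow_mul_sum_rpow {ι : Type*} (s : Finset ι) {a : ι → ℝ}
    (ha : ∀ i ∈ s, 0 ≤ a i) {t : ℝ} (ht : 0 < t) :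
    (∑ i ∈ s, a i) ^ t ≤ (#s : ℝ) ^ t * ∑ i ∈ s, a i ^ t := by
  rcases s.eq_empty_or_nonempty with rfl | hs
  · simp [Real.zero_rpow ht.ne']
  obtain ⟨j, hj, hmax⟩ := s.exists_max_image a hs
  have hsum : ∑ i ∈ s, a i ≤ #s * a j := by
    simpa using s.sum_le_card_nsmul a (a j) hmax
  calc (∑ i ∈ s, a i) ^ t ≤ (#s * a j) ^ t :=
        Real.rpow_le_rpow (sum_nonneg ha) hsum ht.le
    _ = (#s : ℝ) ^ t * a j ^ t := Real.mul_rpow (Nat.cast_nonneg _) (ha j hj)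
    _ ≤ (#s : ℝ) ^ t * ∑ i ∈ s, a i ^ t := by
        gcongr
        exact single_le_sum (fun i hi => Real.rpow_nonneg (ha i hi) t) hj

lemma Real.rpow_le_max_one_rpow {c t Q : ℝ} (hc : 0 ≤ c) (ht : 0 ≤ t) (htQ : t ≤ Q) :
    c ^ t ≤ max c 1 ^ Q :=
  (Real.rpow_le_rpow hc (le_max_left c 1) ht).trans
    (Real.rpow_le_rpow_of_exponent_le (le_max_right c 1) htQ)

lemma Real.mul_add_add_sum_rpow_le {ι : Type*} [Fintype ι] {C a b t Q : ℝ} {c : ι → ℝ}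
    (hC : 0 ≤ C) (ha : 0 ≤ a) (hb : 0 ≤ b) (hc : ∀ i, 0 ≤ c i) (ht : 0 < t) (htQ : t ≤ Q) :
    (C * (a + b + ∑ i, c i)) ^ t ≤
      max (C * (Fintype.card ι + 2)) 1 ^ Q * (a ^ t + b ^ t + ∑ i, c i ^ t) := by
  set d : Option (Option ι) → ℝ := fun o => o.elim a fun o' => o'.elim b c
  have hd : ∀ o, 0 ≤ d o := by rintro (_ | _ | i) <;> simp [d, ha, hb, hc]
  have hd_sum := Real.rpow_sum_le_card_rpow_mul_sum_rpow univ (a := d) (fun o _ => hd o) ht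
  simp only [d, Fintype.sum_option, card_univ, Fintype.card_option, Option.elim] at hd_sum
  have hsum_nonneg : 0 ≤ a + b + ∑ i, c i := by
    have := sum_nonneg fun i (_ : i ∈ univ) => hc i; positivity
  calc (C * (a + b + ∑ i, c i)) ^ t
      = C ^ t * (a + b + ∑ i, c i) ^ t := Real.mul_rpow hC hsum_nonneg
    _ ≤ C ^ t * ((Fintype.card ι + 2 : ℝ) ^ t * (a ^ t + b ^ t + ∑ i, c i ^ t)) := by
        gcongr; push_cast at hd_sum; simpa [add_assoc, one_add_one_eq_two] using hd_sum
    _ = (C * (Fintype.card ι + 2)) ^ t * (a ^ t + b ^ t + ∑ i, c i ^ t) := by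
        rw [Real.mul_rpow hC (by positivity), mul_assoc]
    _ ≤ _ := by
        gcongr
        · have := sum_nonneg fun i (_ : i ∈ univ) => Real.rpow_nonneg (hc i) t; positivity
        · exact Real.rpow_le_max_one_rpow (by positivity) ht.le htQ

lemma aemeasurable_comp_of_continuous_of_measurable {α β : Type*} [MeasurableSpace α]
    {μ : Measure α} [TopologicalSpace β] [TopologicalSpace.MetrizableSpace β]
    [MeasurableSpace β] [SecondCountableTopology β] [OpensMeasurableSpace β] {f : α → β → ℝ}
    (hmeas : ∀ y, Measurable fun x => f x y) (hcont : ∀ᵐ x ∂μ, Continuous (f x))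
    {v : α → β} (hv : Measurable v) : AEMeasurable (fun x => f x (v x)) μ := by
  classical
  -- Redefining `f` on a measurable null set makes it continuous in `y` for every `x`,
  -- hence jointly measurable.
  obtain ⟨N, hN, hNm, hN0⟩ := exists_measurable_superset_of_null (ae_iff.mp hcont)
  set F : β → α → ℝ := fun y x => if x ∈ N then 0 else f x y
  have hF_cont : ∀ x, Continuous fun y => F y x := by
    intro x
    by_cases hx : x ∈ N
    · simp only [F, hx, if_true, continuous_const]
    · simpa only [F, hx, if_false] using not_not.mp fun h => hx (hN h)
  have hF : Measurable (Function.uncurry F) :=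
    measurable_uncurry_of_continuous_of_measurable hF_cont
      fun y => Measurable.ite hNm measurable_const (hmeas y)
  refine ⟨fun x => F (v x) x, hF.comp (hv.prodMk measurable_id), ?_⟩
  filter_upwards [measure_eq_zero_iff_ae_notMem.mp hN0] with x hx
  simp [F, hx]

lemma ContinuousOn.conjExponent {α : Type*} [TopologicalSpace α] {q : α → ℝ} {s : Set α}
    (hq : ContinuousOn q s) (hq1 : ∀ x ∈ s, q x ≠ 1) :
    ContinuousOn (fun x => (q x).conjExponent) s :=
  hq.div (hq.sub continuousOn_const) fun x hx => sub_ne_zero.2 (hq1 x hx)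

lemma Real.abs_rpow_le_of_growth {ι : Type*} [Fintype ι] {y C a s q q' P Q : ℝ}
    {ξ r p : ι → ℝ} (hC : 0 ≤ C) (hqq' : q.HolderConjugate q')
    (hy : |y| ≤ C * (|a| + |s| ^ (q - 1) + ∑ i, |ξ i| ^ r i)) (hqP : q ≤ P) (hq'Q : q' ≤ Q)
    (hr : ∀ i, 0 ≤ r i * q' ∧ r i * q' ≤ p i) :
    |y| ^ q' ≤ max (C * (Fintype.card ι + 2)) 1 ^ Q *
      (|a| ^ q' + (|s| ^ P + 1) + ∑ i, (|ξ i| ^ p i + 1)) := by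
  have hq' := hqq'.symm.pos
  calc |y| ^ q'
      ≤ (C * (|a| + |s| ^ (q - 1) + ∑ i, |ξ i| ^ r i)) ^ q' :=
        Real.rpow_le_rpow (abs_nonneg _) hy hq'.le
    _ ≤ max (C * (Fintype.card ι + 2)) 1 ^ Q *
          (|a| ^ q' + (|s| ^ (q - 1)) ^ q' + ∑ i, (|ξ i| ^ r i) ^ q') :=
        Real.mul_add_add_sum_rpow_le hC (abs_nonneg _) (by positivity) (fun i => by positivity)
          hq' hq'Q
    _ ≤ _ := by
        gcongr _ * (_ + ?_ + ∑ i, ?_) with i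
        · rw [← Real.rpow_mul (abs_nonneg _), hqq'.sub_one_mul_conj]
          exact Real.rpow_le_rpow_add_one (abs_nonneg _) hqq'.nonneg hqP
        · rw [← Real.rpow_mul (abs_nonneg _)]
          exact Real.rpow_le_rpow_add_one (abs_nonneg _) (hr i).1 (hr i).2

theorem nemytskii_well_defined_general
    {n : ℕ} (Ω : Set (Fin n → ℝ)) (hΩo : IsOpen Ω)
    (hΩb : Bornology.IsBounded Ω)
    (p : Fin n → (Fin n → ℝ) → ℝ)
    (pM : (Fin n → ℝ) → ℝ)
    (f : (Fin n → ℝ) → ℝ → (Fin n → ℝ) → ℝ)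
    (hfmeas : ∀ (s : ℝ) (ξ : Fin n → ℝ), Measurable (fun x => f x s ξ))
    (hfcont : ∀ᵐ x ∂(volume.restrict Ω),
      Continuous (fun sξ : ℝ × (Fin n → ℝ) => f x sξ.1 sξ.2))
    (C : ℝ) (hC : 0 < C)
    (q : (Fin n → ℝ) → ℝ) (hqc : ContinuousOn q (closure Ω))
    (hq1 : ∀ x ∈ closure Ω, 1 < q x)
    (hqpM : ∀ x ∈ Ω, q x ≤ pM x)
    (q' : (Fin n → ℝ) → ℝ) (hq' : ∀ x, q' x = q x / (q x - 1))
    (k : (Fin n → ℝ) → ℝ)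
    (hkint : IntegrableOn (fun x => |k x| ^ q' x) Ω)
    (r : Fin n → (Fin n → ℝ) → ℝ)
    (hr : ∀ i, ∀ x ∈ Ω, 1 < r i x * q' x ∧ r i x * q' x ≤ p i x)
    (hgrowth : ∀ᵐ x ∂(volume.restrict Ω), ∀ (s : ℝ) (ξ : Fin n → ℝ),
      |f x s ξ| ≤ C * (|k x| + |s| ^ (q x - 1) + ∑ i, |ξ i| ^ r i x))
    (u : (Fin n → ℝ) → ℝ) (hum : Measurable u)
    (huint : IntegrableOn (fun x => |u x| ^ pM x) Ω)
    (g : (Fin n → ℝ) → Fin n → ℝ) (hgm : ∀ i, Measurable (fun x => g x i))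
    (hgint : ∀ i, IntegrableOn (fun x => |g x i| ^ p i x) Ω) :
    IntegrableOn (fun x => |f x (u x) (g x)| ^ q' x) Ω := by
  have hΩm : MeasurableSet Ω := hΩo.measurableSet
  have hconj : ∀ x ∈ Ω, (q x).HolderConjugate (q' x) := fun x hx => by
    rw [hq']; exact .conjExponent (hq1 x (subset_closure hx))
  have hq'_cont : ContinuousOn q' (closure Ω) := by
    rw [funext hq']; exact hqc.conjExponent fun x hx => (hq1 x hx).ne'
  obtain ⟨Q, hQ⟩ := hΩb.isCompact_closure.bddAbove_image hq'_cont
  have hf_meas : AEStronglyMeasurable (fun x => |f x (u x) (g x)| ^ q' x) (volume.restrict Ω) :=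
    ((aemeasurable_comp_of_continuous_of_measurable (fun sξ => hfmeas sξ.1 sξ.2) hfcont
      (hum.prodMk (measurable_pi_iff.mpr hgm))).abs.pow
      ((hq'_cont.mono subset_closure).aemeasurable hΩm)).aestronglyMeasurable
  have hone : IntegrableOn (fun _ => (1 : ℝ)) Ω := integrableOn_const hΩb.measure_lt_top.ne
  have hbound : IntegrableOn (fun x => max (C * (n + 2)) 1 ^ Q *
      (|k x| ^ q' x + (|u x| ^ pM x + 1) + ∑ i, (|g x i| ^ p i x + 1))) Ω :=
    ((hkint.add (huint.add hone)).add
      (integrable_finsetSum _ fun i _ => (hgint i).add hone)).const_mul _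
  refine hbound.mono' hf_meas ?_
  filter_upwards [hgrowth, ae_restrict_mem hΩm] with x hfx hx
  rw [Real.norm_of_nonneg (by positivity)]
  simpa only [Fintype.card_fin] using Real.abs_rpow_le_of_growth hC.le (hconj x hx) (hfx _ _)
    (hqpM x hx) (hQ ⟨x, subset_closure hx, rfl⟩)
    fun i => ⟨zero_le_one.trans (hr i x hx).1.le, (hr i x hx).2⟩

/-- Well-definedness of the Nemytskii map associated to a Carathéodory function `f` with
anisotropic nonstandard growth: `f(·, u(·), g(·)) ∈ L^{q'(x)}(Ω)` whenever `u` and the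
components `gᵢ` have finite modulars for the exponents `p_M` and `pᵢ`. -/
theorem nemytskii_well_defined
    {n : ℕ} (hn : 3 ≤ n) (Ω : Set (Fin n → ℝ)) (hΩo : IsOpen Ω)
    (hΩb : Bornology.IsBounded Ω) (hΩc : IsConnected Ω)
    (p : Fin n → (Fin n → ℝ) → ℝ)
    (hpc : ∀ i, ContinuousOn (p i) (closure Ω))
    (hp1 : ∀ i, ∀ x ∈ closure Ω, 1 < p i x)
    (pM : (Fin n → ℝ) → ℝ) (hpM : ∀ x, pM x = ⨆ i, p i x)
    (f : (Fin n → ℝ) → ℝ → (Fin n → ℝ) → ℝ)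
    (hfmeas : ∀ (s : ℝ) (ξ : Fin n → ℝ), Measurable (fun x => f x s ξ))
    (hfcont : ∀ᵐ x ∂(volume.restrict Ω),
      Continuous (fun sξ : ℝ × (Fin n → ℝ) => f x sξ.1 sξ.2))
    (C : ℝ) (hC : 0 < C)
    (q : (Fin n → ℝ) → ℝ) (hqc : ContinuousOn q (closure Ω))
    (hq1 : ∀ x ∈ closure Ω, 1 < q x)
    (hqpM : ∀ x ∈ Ω, q x ≤ pM x)
    (q' : (Fin n → ℝ) → ℝ) (hq' : ∀ x, q' x = q x / (q x - 1))
    (k : (Fin n → ℝ) → ℝ) (hkm : Measurable k)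
    (hkint : IntegrableOn (fun x => |k x| ^ q' x) Ω)
    (r : Fin n → (Fin n → ℝ) → ℝ)
    (hrm : ∀ i, Measurable (r i)) (hrnn : ∀ i x, 0 ≤ r i x)
    (hr : ∀ i, ∀ x ∈ Ω, 1 < r i x * q' x ∧ r i x * q' x ≤ p i x)
    (hgrowth : ∀ᵐ x ∂(volume.restrict Ω), ∀ (s : ℝ) (ξ : Fin n → ℝ),
      |f x s ξ| ≤ C * (|k x| + |s| ^ (q x - 1) + ∑ i, |ξ i| ^ r i x))
    (u : (Fin n → ℝ) → ℝ) (hum : Measurable u)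
    (huint : IntegrableOn (fun x => |u x| ^ pM x) Ω)
    (g : (Fin n → ℝ) → Fin n → ℝ) (hgm : ∀ i, Measurable (fun x => g x i))
    (hgint : ∀ i, IntegrableOn (fun x => |g x i| ^ p i x) Ω) :
    IntegrableOn (fun x => |f x (u x) (g x)| ^ q' x) Ω :=
  nemytskii_well_defined_general Ω hΩo hΩb p pM f hfmeas hfcont C hC q hqc hq1 hqpM q' hq' k hkint r
    hr hgrowth u hum huint g hgm hgint
end

section
/- Admissible affine homotopies are of class (S_+)_T: let E be a bounded open set in X, let T : Ē → X* be bounded, continuous and of class (S_+), and let F, S : Ē → X be demicontinuous and of class (S_+)_T. Define H(t, u) := (1 − t) F u + t S u for (t, u) ∈ [0,1] × Ē. Then for every sequence (t_n) ⊂ [0,1] with t_n → t and every sequence (u_n) ⊂ Ē with u_n ⇀ u in X, T u_n ⇀ y in X*, and limsup_n (T u_n − y)(H(t_n, u_n)) ≤ 0, one has u_n → u strongly in X. -/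
open Filter Topology

/-!
Write `a k`, `b k` for the pairings of `T (u k) - y` with `F (u k)` and `S (u k)`. The pairing
with `H (t k, u k)` is a convex combination of them, hence at least `min (a k) (b k)`. So along
any subsequence, either `a ≤ b` frequently, and a further subsequence has `limsup a ≤ 0`, or
eventually `b < a`, and `limsup b ≤ 0`. The `(S₊)_T` property of `F`, resp. `S`, makes that
subsequence converge strongly to `ulim`, and a sequence all of whose subsequences have
subsequences converging to `ulim` converges to `ulim`.
-/

namespace Real

variable {α : Type*} {f : Filter α} {a : α → ℝ}

/-- No boundedness hypothesis is needed: in `ℝ` the `limsup` of a sequence that is not bounded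
below is the junk value `0`. -/
lemma limsup_nonpos_of_forall_eventually_le (h : ∀ ε > 0, ∀ᶠ x in f, a x ≤ ε) :
    limsup a f ≤ 0 := by
  by_cases hco : IsCoboundedUnder (· ≤ ·) f a
  · exact le_of_forall_pos_le_add fun _ hε => by simpa using limsup_le_of_le hco (h _ hε)
  · rw [limsup_of_not_isCoboundedUnder hco]

lemma forall_eventually_le_of_limsup_nonpos (hb : IsBoundedUnder (· ≤ ·) f a)
    (ha : limsup a f ≤ 0) : ∀ ε > 0, ∀ᶠ x in f, a x ≤ ε := fun _ hε =>
  (eventually_lt_of_limsup_lt (ha.trans_lt hε) hb).mono fun _ hx => hx.le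

end Real

lemma min_le_convex_comb {τ x y : ℝ} (h0 : 0 ≤ τ) (h1 : τ ≤ 1) :
    min x y ≤ (1 - τ) * x + τ * y := by
  nlinarith [min_le_left x y, min_le_right x y]

lemma convex_comb_le_max {τ x y : ℝ} (h0 : 0 ≤ τ) (h1 : τ ≤ 1) :
    (1 - τ) * x + τ * y ≤ max x y := by
  nlinarith [le_max_left x y, le_max_right x y]

lemma exists_subseq_limsup_nonpos_of_min {a b : ℕ → ℝ}
    (h : ∀ ε > 0, ∀ᶠ k in atTop, min (a k) (b k) ≤ ε) :
    ∃ φ : ℕ → ℕ, StrictMono φ ∧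
      (limsup (a ∘ φ) atTop ≤ 0 ∨ limsup (b ∘ φ) atTop ≤ 0) := by
  by_cases hfreq : ∃ᶠ k in atTop, a k ≤ b k
  · obtain ⟨φ, hφ, hab⟩ := extraction_of_frequently_atTop hfreq
    refine ⟨φ, hφ, Or.inl <| Real.limsup_nonpos_of_forall_eventually_le fun ε hε => ?_⟩
    filter_upwards [hφ.tendsto_atTop.eventually (h ε hε)] with k hk
    rwa [min_eq_left (hab k)] at hk
  · refine ⟨id, strictMono_id, Or.inr <| Real.limsup_nonpos_of_forall_eventually_le fun ε hε => ?_⟩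
    filter_upwards [h ε hε, not_frequently.mp hfreq] with k hk hba
    rwa [min_eq_right (not_le.mp hba).le] at hk

section WeakConvergence

variable {X : Type*} [NormedAddCommGroup X] [NormedSpace ℝ X] {σ : ℕ → ℕ}

lemma WeakConv.comp {u : ℕ → X} {x : X} (hu : WeakConv u x) (hσ : Tendsto σ atTop atTop) :
    WeakConv (u ∘ σ) x := fun f => (hu f).comp hσ

lemma WeakConvDual.comp {v : ℕ → X →L[ℝ] ℝ} {w : X →L[ℝ] ℝ} (hv : WeakConvDual v w)
    (hσ : Tendsto σ atTop atTop) : WeakConvDual (v ∘ σ) w := fun x => (hv x).comp hσ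

end WeakConvergence

theorem affine_homotopy_SplusT_general
    {X : Type*} [NormedAddCommGroup X] [NormedSpace ℝ X]
    (E : Set X)
    (T : X → X →L[ℝ] ℝ)
    (F S : X → X)
    (hFSplusT : ∀ (u : ℕ → X) (ulim : X) (y : X →L[ℝ] ℝ), (∀ k, u k ∈ closure E) →
      WeakConv u ulim → WeakConvDual (fun k => T (u k)) y →
      limsup (fun k => (T (u k) - y) (F (u k))) atTop ≤ 0 → Tendsto u atTop (𝓝 ulim))
    (hSSplusT : ∀ (u : ℕ → X) (ulim : X) (y : X →L[ℝ] ℝ), (∀ k, u k ∈ closure E) →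
      WeakConv u ulim → WeakConvDual (fun k => T (u k)) y →
      limsup (fun k => (T (u k) - y) (S (u k))) atTop ≤ 0 → Tendsto u atTop (𝓝 ulim))
    (t : ℕ → ℝ) (ht : ∀ k, t k ∈ Set.Icc (0 : ℝ) 1)
    (u : ℕ → X) (hu : ∀ k, u k ∈ closure E) (ulim : X) (hw : WeakConv u ulim)
    (y : X →L[ℝ] ℝ) (hy : WeakConvDual (fun k => T (u k)) y)
    (hls : limsup (fun k => (T (u k) - y) ((1 - t k) • F (u k) + t k • S (u k)))
      atTop ≤ 0) :
    Tendsto u atTop (𝓝 ulim) := by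
  set a : ℕ → ℝ := fun k => (T (u k) - y) (F (u k))
  set b : ℕ → ℝ := fun k => (T (u k) - y) (S (u k))
  by_cases hA : IsBoundedUnder (· ≤ ·) atTop a
  swap; · exact hFSplusT u ulim y hu hw hy (Real.limsup_of_not_isBoundedUnder hA).le
  by_cases hB : IsBoundedUnder (· ≤ ·) atTop b
  swap; · exact hSSplusT u ulim y hu hw hy (Real.limsup_of_not_isBoundedUnder hB).le
  have hc : ∀ ε > 0, ∀ᶠ k in atTop, (1 - t k) * a k + t k * b k ≤ ε := by
    simp only [map_add, map_smul, smul_eq_mul] at hls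
    exact Real.forall_eventually_le_of_limsup_nonpos ((hA.sup hB).mono_le <|
      .of_forall fun k => convex_comb_le_max (ht k).1 (ht k).2) hls
  refine tendsto_of_subseq_tendsto fun ns hns => ?_
  have hmin : ∀ ε > 0, ∀ᶠ k in atTop, min (a (ns k)) (b (ns k)) ≤ ε := fun ε hε =>
    (hns.eventually (hc ε hε)).mono fun k hk =>
      (min_le_convex_comb (ht (ns k)).1 (ht (ns k)).2).trans hk
  obtain ⟨φ, hφ, ha | hb⟩ := exists_subseq_limsup_nonpos_of_min hmin
  all_goals
    have hσ : Tendsto (ns ∘ φ) atTop atTop := hns.comp hφ.tendsto_atTop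
    refine ⟨φ, ?_⟩
  · exact hFSplusT (u ∘ ns ∘ φ) ulim y (fun _ => hu _) (hw.comp hσ) (hy.comp hσ) ha
  · exact hSSplusT (u ∘ ns ∘ φ) ulim y (fun _ => hu _) (hw.comp hσ) (hy.comp hσ) hb

/-- Admissible affine homotopies `H(t,u) = (1−t)Fu + tSu` between maps of class `(S₊)_T`
are of class `(S₊)_T`. -/
theorem affine_homotopy_SplusT
    {X : Type*} [NormedAddCommGroup X] [NormedSpace ℝ X] [CompleteSpace X]
    (hrefl : Function.Surjective (NormedSpace.inclusionInDoubleDual ℝ X))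
    (E : Set X) (hEo : IsOpen E) (hEb : Bornology.IsBounded E)
    (T : X → X →L[ℝ] ℝ)
    (hTb : ∀ B ⊆ closure E, Bornology.IsBounded B → Bornology.IsBounded (T '' B))
    (hTc : ContinuousOn T (closure E))
    (hTSplus : ∀ (u : ℕ → X) (ulim : X), (∀ k, u k ∈ closure E) → WeakConv u ulim →
      limsup (fun k => T (u k) (u k - ulim)) atTop ≤ 0 → Tendsto u atTop (𝓝 ulim))
    (F S : X → X)
    (hFdemi : ∀ (u : ℕ → X) (ulim : X), (∀ k, u k ∈ closure E) → ulim ∈ closure E →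
      Tendsto u atTop (𝓝 ulim) → WeakConv (fun k => F (u k)) (F ulim))
    (hSdemi : ∀ (u : ℕ → X) (ulim : X), (∀ k, u k ∈ closure E) → ulim ∈ closure E →
      Tendsto u atTop (𝓝 ulim) → WeakConv (fun k => S (u k)) (S ulim))
    (hFSplusT : ∀ (u : ℕ → X) (ulim : X) (y : X →L[ℝ] ℝ), (∀ k, u k ∈ closure E) →
      WeakConv u ulim → WeakConvDual (fun k => T (u k)) y →
      limsup (fun k => (T (u k) - y) (F (u k))) atTop ≤ 0 → Tendsto u atTop (𝓝 ulim))
    (hSSplusT : ∀ (u : ℕ → X) (ulim : X) (y : X →L[ℝ] ℝ), (∀ k, u k ∈ closure E) →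
      WeakConv u ulim → WeakConvDual (fun k => T (u k)) y →
      limsup (fun k => (T (u k) - y) (S (u k))) atTop ≤ 0 → Tendsto u atTop (𝓝 ulim))
    (t : ℕ → ℝ) (ht : ∀ k, t k ∈ Set.Icc (0 : ℝ) 1) (tlim : ℝ)
    (htlim : Tendsto t atTop (𝓝 tlim))
    (u : ℕ → X) (hu : ∀ k, u k ∈ closure E) (ulim : X) (hw : WeakConv u ulim)
    (y : X →L[ℝ] ℝ) (hy : WeakConvDual (fun k => T (u k)) y)
    (hls : limsup (fun k => (T (u k) - y) ((1 - t k) • F (u k) + t k • S (u k)))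
      atTop ≤ 0) :
    Tendsto u atTop (𝓝 ulim) :=
  affine_homotopy_SplusT_general E T F S hFSplusT hSSplusT t ht u hu ulim hw y hy hls
end
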